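/- arXiv:1706.02896 — 3 statements merged into one kernel-verified Lean document; each statement's English description precedes it below -/
import Mathlib

section
/- Let H be a finite Eulerian multidigraph with m_H(x,y) ≥ 1 for some vertices x ≠ y, and let H' be any multidigraph obtained from H by removing one copy of the arc from x to y and then removing the arcs of finitely many directed cycles (formally: H' is a sub-multidigraph of H minus one copy of the arc xy, and the pointwise difference (H − xy) − H' is a finite sum of arc-multiplicity functions of directed cycles). Then H' contains a directed path from y to x. -/
/-- `c` is the arc-multiplicity function of a directed cycle: there is a sequence of
`k + 1 ≥ 1` pairwise distinct vertices `w 0, …, w k` such that each arc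
`w i → w (i+1)` (indices cyclically, in `Fin (k+1)`) has multiplicity `1`, and all
other multiplicities are `0`. -/
def IsCycle {V : Type*} (c : V → V → ℕ) : Prop :=
  ∃ (k : ℕ) (w : Fin (k + 1) → V), Function.Injective w ∧
    (∀ i : Fin (k + 1), c (w i) (w (i + 1)) = 1) ∧
    (∀ u v : V, (∀ i : Fin (k + 1), ¬(u = w i ∧ v = w (i + 1))) → c u v = 0)

/-- `m` is a finite sum of arc-multiplicity functions of directed cycles. -/
def IsCycleSum {V : Type*} (m : V → V → ℕ) : Prop :=
  ∃ (n : ℕ) (c : Fin n → (V → V → ℕ)),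
    (∀ i, IsCycle (c i)) ∧ ∀ u v, m u v = ∑ i, c i u v

/-- A multidigraph is *Eulerian* if every vertex has in-degree equal to out-degree. -/
def IsEulerian {V : Type*} [Fintype V] (m : V → V → ℕ) : Prop :=
  ∀ v : V, ∑ u, m u v = ∑ u, m v u

/-- The multidigraph `m` contains a directed path from `s` to `t`: a sequence of
pairwise distinct vertices `s = w 0, w 1, …, w k = t` with `m (w i) (w (i+1)) ≥ 1`
for each `i < k`. -/
def HasPath {V : Type*} (m : V → V → ℕ) (s t : V) : Prop :=
  ∃ (k : ℕ) (w : Fin (k + 1) → V), Function.Injective w ∧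
    w 0 = s ∧ w (Fin.last k) = t ∧
    ∀ i : Fin k, 1 ≤ m (w i.castSucc) (w i.succ)

open Finset

private lemma cycle_balanced {V : Type*} [Fintype V] [DecidableEq V] {c : V → V → ℕ}
    (hc : IsCycle c) :
    ∀ v, ∑ u, c u v = ∑ u, c v u := by
  obtain ⟨k, w, hinj, hone, hzero⟩ := hc
  have hrep : ∀ u v, c u v = ∑ i : Fin (k+1), if u = w i ∧ v = w (i+1) then 1 else 0 := by
    intro u v
    by_cases h : ∃ i, u = w i ∧ v = w (i + 1)
    · obtain ⟨i, hu, hv⟩ := h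
      subst hu; subst hv
      rw [hone i, Finset.sum_eq_single i]
      · simp
      · intro j _ hji
        simp only [ite_eq_right_iff, one_ne_zero, imp_false, not_and]
        intro hj
        exact absurd (hinj hj).symm hji
      · simp
    · push_neg at h
      rw [hzero u v (fun i hi => (h i hi.1) hi.2)]
      symm
      refine Finset.sum_eq_zero fun i _ => ?_
      simp only [ite_eq_right_iff, one_ne_zero, imp_false, not_and]
      intro hu hv
      exact (h i hu) hv
  intro v
  have hin : ∑ u, c u v = ∑ i : Fin (k+1), if v = w (i+1) then 1 else 0 := by
    simp only [hrep]
    rw [Finset.sum_comm]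
    refine Finset.sum_congr rfl fun i _ => ?_
    by_cases hv : v = w (i+1) <;> simp [hv]
  have hout : ∑ u, c v u = ∑ i : Fin (k+1), if v = w i then 1 else 0 := by
    simp only [hrep]
    rw [Finset.sum_comm]
    refine Finset.sum_congr rfl fun i _ => ?_
    by_cases hv : v = w i <;> simp [hv]
  rw [hin, hout]
  exact Fintype.sum_equiv (Equiv.addRight (1 : Fin (k+1)))
    (fun i => if v = w (i+1) then 1 else 0) (fun i => if v = w i then 1 else 0)
    (fun i => rfl)


/-- Let `m` be a finite Eulerian multidigraph with `m x y ≥ 1`,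
`x ≠ y`, and let `m'` be obtained from `m` by removing one copy of the arc `x → y`
and then removing the arcs of finitely many directed cycles (formally: `m'` is a
sub-multidigraph of `m` minus one copy of the arc `x → y`, and the pointwise
difference is a finite sum of directed cycles).  Then `m'` contains a directed path
from `y` to `x`. -/
theorem path_back_after_removals {V : Type*} [Fintype V] [DecidableEq V]
    (m : V → V → ℕ) (hm : IsEulerian m) (x y : V) (hne : x ≠ y) (hxy : 1 ≤ m x y)
    (m' : V → V → ℕ)
    (hsub : ∀ u v, m' u v ≤ m u v - (if u = x ∧ v = y then 1 else 0))
    (hdiff : IsCycleSum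
      (fun u v => (m u v - (if u = x ∧ v = y then 1 else 0)) - m' u v)) :
    HasPath m' y x := by
  classical
  obtain ⟨n, c, hc, hsum⟩ := hdiff
  have heq : ∀ u v, m u v = m' u v + (∑ i, c i u v) + (if u = x ∧ v = y then 1 else 0) := by
    intro u v
    have h1 := hsum u v
    have h2 := hsub u v
    simp only at h1
    by_cases h : u = x ∧ v = y
    · have hm1 : 1 ≤ m u v := h.1 ▸ h.2 ▸ hxy
      rw [if_pos h] at h1 h2 ⊢
      omega
    · rw [if_neg h] at h1 h2 ⊢
      omega
  have hbal : ∀ v, (∑ u, m' u v) + (if v = y then 1 else 0)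
      = (∑ u, m' v u) + (if v = x then 1 else 0) := by
    intro v
    have hin : ∑ u, m u v
        = (∑ u, m' u v) + (∑ i, ∑ u, c i u v) + (if v = y then 1 else 0) := by
      calc ∑ u, m u v
          = ∑ u, (m' u v + (∑ i, c i u v) + (if u = x ∧ v = y then 1 else 0)) :=
            Finset.sum_congr rfl fun u _ => heq u v
        _ = (∑ u, m' u v) + (∑ u, ∑ i, c i u v)
              + (∑ u, if u = x ∧ v = y then 1 else 0) := by
            rw [Finset.sum_add_distrib, Finset.sum_add_distrib]
        _ = (∑ u, m' u v) + (∑ i, ∑ u, c i u v) + (if v = y then 1 else 0) := by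
            rw [Finset.sum_comm]
            congr 1
            by_cases hv : v = y <;> simp [hv]
    have hout : ∑ u, m v u
        = (∑ u, m' v u) + (∑ i, ∑ u, c i v u) + (if v = x then 1 else 0) := by
      calc ∑ u, m v u
          = ∑ u, (m' v u + (∑ i, c i v u) + (if v = x ∧ u = y then 1 else 0)) :=
            Finset.sum_congr rfl fun u _ => heq v u
        _ = (∑ u, m' v u) + (∑ u, ∑ i, c i v u)
              + (∑ u, if v = x ∧ u = y then 1 else 0) := by
            rw [Finset.sum_add_distrib, Finset.sum_add_distrib]
        _ = (∑ u, m' v u) + (∑ i, ∑ u, c i v u) + (if v = x then 1 else 0) := by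
            rw [Finset.sum_comm]
            congr 1
            by_cases hv : v = x <;> simp [hv]
    have hcyc : (∑ i, ∑ u, c i u v) = ∑ i, ∑ u, c i v u :=
      Finset.sum_congr rfl fun i _ => cycle_balanced (hc i) v
    have hmv := hm v
    rw [hin, hout, hcyc] at hmv
    omega
  -- reachability
  have key : Relation.ReflTransGen (fun a b => 1 ≤ m' a b) y x := by
    by_contra hx
    set S : Finset V := univ.filter (fun v => Relation.ReflTransGen (fun a b => 1 ≤ m' a b) y v) with hS
    have hyS : y ∈ S := by
      simp only [hS, mem_filter, mem_univ, true_and]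
      exact Relation.ReflTransGen.refl
    have hxS : x ∉ S := by
      simp only [hS, mem_filter, mem_univ, true_and]
      exact hx
    have hzero : ∀ v ∈ S, ∀ u, u ∉ S → m' v u = 0 := by
      intro v hv u hu
      by_contra hmu
      apply hu
      simp only [hS, mem_filter, mem_univ, true_and] at hv ⊢
      exact hv.tail (show (1:ℕ) ≤ m' v u by omega)
    have hout : ∑ v ∈ S, ∑ u, m' v u = ∑ v ∈ S, ∑ u ∈ S, m' v u :=
      Finset.sum_congr rfl fun v hv =>
        (Finset.sum_subset (Finset.subset_univ S) (fun u _ hu => hzero v hv u hu)).symm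
    have hin : ∑ v ∈ S, ∑ u ∈ S, m' u v ≤ ∑ v ∈ S, ∑ u, m' u v :=
      Finset.sum_le_sum fun v _ =>
        Finset.sum_le_sum_of_subset (Finset.subset_univ S)
    have hswap : ∑ v ∈ S, ∑ u ∈ S, m' u v = ∑ v ∈ S, ∑ u ∈ S, m' v u :=
      Finset.sum_comm
    have hbalS : (∑ v ∈ S, ∑ u, m' u v) + 1 = ∑ v ∈ S, ∑ u, m' v u := by
      have h1 : ∑ v ∈ S, ((∑ u, m' u v) + (if v = y then 1 else 0))
          = ∑ v ∈ S, ((∑ u, m' v u) + (if v = x then 1 else 0)) :=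
        Finset.sum_congr rfl fun v _ => hbal v
      rw [Finset.sum_add_distrib, Finset.sum_add_distrib] at h1
      rw [Finset.sum_ite_eq' S y (fun _ => 1), Finset.sum_ite_eq' S x (fun _ => 1)] at h1
      rw [if_pos hyS, if_neg hxS] at h1
      omega
    omega
  -- convert reachability to a path
  have base : HasPath m' y y :=
    ⟨0, fun _ => y, fun a b _ => Fin.ext (by omega), rfl, rfl, fun i => i.elim0⟩
  have extend : ∀ t u : V, HasPath m' y t → 1 ≤ m' t u → HasPath m' y u := by
    rintro t u ⟨k, w, hinj, h0, hlast, hstep⟩ htu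
    by_cases hu : ∃ j : Fin (k+1), w j = u
    · obtain ⟨j, hj⟩ := hu
      have hjk : j.val + 1 ≤ k + 1 := j.isLt
      refine ⟨j.val, fun i => w (Fin.castLE hjk i), hinj.comp (Fin.castLE_injective hjk),
        ?_, ?_, ?_⟩
      · simpa using h0
      · show w (Fin.castLE hjk (Fin.last j.val)) = u
        have : Fin.castLE hjk (Fin.last j.val) = j := by
          apply Fin.ext; simp
        rw [this, hj]
      · intro i
        have hik : i.val < k := lt_of_lt_of_le i.isLt (Nat.lt_succ_iff.mp j.isLt)
        have h := hstep ⟨i.val, hik⟩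
        have e1 : Fin.castLE hjk i.castSucc = Fin.castSucc ⟨i.val, hik⟩ := by
          apply Fin.ext; simp
        have e2 : Fin.castLE hjk i.succ = Fin.succ ⟨i.val, hik⟩ := by
          apply Fin.ext; simp
        show 1 ≤ m' (w (Fin.castLE hjk i.castSucc)) (w (Fin.castLE hjk i.succ))
        rw [e1, e2]; exact h
    · push_neg at hu
      refine ⟨k + 1, fun i => if h : i.val < k + 1 then w ⟨i.val, h⟩ else u, ?_, ?_, ?_, ?_⟩
      · intro a b hab
        by_cases ha : a.val < k + 1 <;> by_cases hb : b.val < k + 1 <;>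
          simp only [ha, hb, dif_pos, dif_neg, not_false_iff] at hab
        · have := hinj hab
          apply Fin.ext
          simpa [Fin.ext_iff] using this
        · exact absurd hab (hu _)
        · exact absurd hab.symm (hu _)
        · apply Fin.ext; omega
      · have h01 : (0 : Fin (k+2)).val < k + 1 := Nat.succ_pos k
        simp only [h01, dif_pos]
        have : (⟨(0 : Fin (k+2)).val, h01⟩ : Fin (k+1)) = 0 := by apply Fin.ext; simp
        rw [this, h0]
      · have : ¬ (Fin.last (k+1)).val < k + 1 := by simp
        simp only [this, dif_neg, not_false_iff]
      · intro i
        have hic : (i.castSucc : Fin (k+2)).val < k + 1 := by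
          simp only [Fin.coe_castSucc]; omega
        by_cases hik : i.val < k
        · have his : (i.succ : Fin (k+2)).val < k + 1 := by simp only [Fin.val_succ]; omega
          simp only [hic, his, dif_pos]
          have h := hstep ⟨i.val, hik⟩
          have e1 : (⟨(i.castSucc : Fin (k+2)).val, hic⟩ : Fin (k+1))
              = Fin.castSucc ⟨i.val, hik⟩ := by apply Fin.ext; simp
          have e2 : (⟨(i.succ : Fin (k+2)).val, his⟩ : Fin (k+1))
              = Fin.succ ⟨i.val, hik⟩ := by apply Fin.ext; simp
          rw [e1, e2]; exact h
        · have hik' : i.val = k := by omega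
          have his : ¬ (i.succ : Fin (k+2)).val < k + 1 := by simp only [Fin.val_succ]; omega
          simp only [hic, his, dif_pos, dif_neg, not_false_iff]
          have e1 : (⟨(i.castSucc : Fin (k+2)).val, hic⟩ : Fin (k+1)) = Fin.last k := by
            apply Fin.ext; simp [hik']
          rw [e1, hlast]; exact htu
  have main : ∀ z, Relation.ReflTransGen (fun a b => 1 ≤ m' a b) y z → HasPath m' y z := by
    intro z hz
    induction hz with
    | refl => exact base
    | tail _ hbc ih => exact extend _ _ ih hbc
  exact main x key
end

section
/- Let D be a finite multidigraph and let s ≠ t be vertices such that the out-degree of s exceeds its in-degree by exactly one, the in-degree of t exceeds its out-degree by exactly one, and every other vertex has in-degree equal to out-degree. Then the arc-multiplicity function of D is the sum of the arc-multiplicity function of a directed path from s to t and a finite sum of arc-multiplicity functions of directed cycles. -/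
/-- `p` is the arc-multiplicity function of a directed path from `s` to `t`:
there is a sequence of pairwise distinct vertices `s = w 0, …, w k = t` such that
each arc `w i → w (i+1)` has multiplicity `1` and all other multiplicities are `0`. -/
def IsPath {V : Type*} (p : V → V → ℕ) (s t : V) : Prop :=
  ∃ (k : ℕ) (w : Fin (k + 1) → V), Function.Injective w ∧
    w 0 = s ∧ w (Fin.last k) = t ∧
    (∀ i : Fin k, p (w i.castSucc) (w i.succ) = 1) ∧
    (∀ u v : V, (∀ i : Fin k, ¬(u = w i.castSucc ∧ v = w i.succ)) → p u v = 0)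


open Finset Function

namespace Function

theorem exists_injective_cycle {α : Type*} [Finite α] [Nonempty α] (f : α → α) :
    ∃ (k : ℕ) (w : Fin (k + 1) → α), Injective w ∧ ∀ l, f (w l) = w (l + 1) := by
  obtain ⟨x, hx⟩ : ∃ x, x ∈ periodicPts f := by
    obtain ⟨i, j, hij, heq⟩ :=
      Finite.exists_ne_map_eq_of_infinite (fun n => f^[n] (Classical.arbitrary α))
    wlog hlt : i < j generalizing i j
    · exact this j i hij.symm heq.symm (by omega)
    refine ⟨f^[i] (Classical.arbitrary α),
      mk_mem_periodicPts (n := j - i) (Nat.sub_pos_of_lt hlt) ?_⟩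
    rw [IsPeriodicPt, IsFixedPt, ← iterate_add_apply, Nat.sub_add_cancel hlt.le, heq]
  obtain ⟨k, hk⟩ : ∃ k, minimalPeriod f x = k + 1 :=
    Nat.exists_eq_succ_of_ne_zero (minimalPeriod_pos_of_mem_periodicPts hx).ne'
  refine ⟨k, fun l => f^[l] x, fun l l' h => Fin.ext ?_, fun l => ?_⟩
  · exact iterate_injOn_Iio_minimalPeriod (by simpa [hk] using l.is_le)
      (by simpa [hk] using l'.is_le) h
  · simp only [Fin.val_add, Fin.val_one', ← iterate_succ_apply' f]
    rw [Nat.add_mod_mod]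
    conv_lhs => rw [← iterate_mod_minimalPeriod_eq, hk]

end Function

section Multidigraph

variable {V : Type*}

section Arcs

variable [DecidableEq V]

def arc (a b : V) : V → V → ℕ := fun u v => if u = a ∧ v = b then 1 else 0

def cycleOf {k : ℕ} (w : Fin (k + 1) → V) : V → V → ℕ := ∑ l, arc (w l) (w (l + 1))

def pathOf {k : ℕ} (w : Fin (k + 1) → V) : V → V → ℕ :=
  ∑ i : Fin k, arc (w i.castSucc) (w i.succ)

theorem sum_arc_apply {ι : Type*} [Fintype ι] {f : ι → V} (hf : Injective f) (g : ι → V)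
    (u v : V) : (∑ i, arc (f i) (g i)) u v = if ∃ i, u = f i ∧ v = g i then 1 else 0 := by
  simp only [Finset.sum_apply, arc]
  split_ifs with h
  · obtain ⟨i, rfl, rfl⟩ := h
    rw [sum_eq_single_of_mem i (mem_univ i) fun j _ hji => if_neg fun h => hji (hf h.1).symm,
      if_pos ⟨rfl, rfl⟩]
  · exact sum_eq_zero fun i _ => if_neg fun hi => h ⟨i, hi⟩

theorem isCycle_cycleOf {k : ℕ} {w : Fin (k + 1) → V} (hw : Injective w) :
    IsCycle (cycleOf w) := by
  refine ⟨k, w, hw, fun l => ?_, fun u v h => ?_⟩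
  · rw [cycleOf, sum_arc_apply hw, if_pos ⟨l, rfl, rfl⟩]
  · rw [cycleOf, sum_arc_apply hw, if_neg (not_exists.mpr h)]

theorem IsCycle.exists_eq_cycleOf {c : V → V → ℕ} (hc : IsCycle c) :
    ∃ (k : ℕ) (w : Fin (k + 1) → V), Injective w ∧ c = cycleOf w := by
  obtain ⟨k, w, hw, hone, hzero⟩ := hc
  refine ⟨k, w, hw, funext₂ fun u v => ?_⟩
  rw [cycleOf, sum_arc_apply hw]
  split_ifs with h
  · obtain ⟨l, rfl, rfl⟩ := h
    exact hone l
  · exact hzero u v (not_exists.mp h)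

theorem isPath_pathOf {k : ℕ} {w : Fin (k + 1) → V} (hw : Injective w) :
    IsPath (pathOf w) (w 0) (w (Fin.last k)) := by
  have hf : Injective fun i : Fin k => w i.castSucc := hw.comp (Fin.castSucc_injective k)
  refine ⟨k, w, hw, rfl, rfl, fun i => ?_, fun u v h => ?_⟩
  · rw [pathOf, sum_arc_apply hf, if_pos ⟨i, rfl, rfl⟩]
  · rw [pathOf, sum_arc_apply hf, if_neg (not_exists.mpr h)]

theorem cycleOf_eq_pathOf_add {k : ℕ} (w : Fin (k + 1) → V) :
    cycleOf w = pathOf w + arc (w (Fin.last k)) (w 0) := by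
  simp only [cycleOf, pathOf, Fin.sum_univ_castSucc, Fin.coeSucc_eq_succ, Fin.last_add_one]

theorem cycleOf_comp_add_right {k : ℕ} (w : Fin (k + 1) → V) (r : Fin (k + 1)) :
    cycleOf (fun l => w (l + r)) = cycleOf w :=
  Fintype.sum_equiv (Equiv.addRight r) _ _ fun l => by simp [add_right_comm]

theorem cycleOf_le {k : ℕ} {w : Fin (k + 1) → V} (hw : Injective w) {m : V → V → ℕ}
    (hm : ∀ l, 0 < m (w l) (w (l + 1))) : cycleOf w ≤ m := by
  intro u v
  rw [cycleOf, sum_arc_apply hw]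
  split_ifs with h
  · obtain ⟨l, rfl, rfl⟩ := h
    exact hm l
  · exact Nat.zero_le _

theorem IsCycle.exists_isPath_add_arc {c : V → V → ℕ} {s t : V} (hc : IsCycle c)
    (hts : 0 < c t s) : ∃ p, IsPath p s t ∧ c = p + arc t s := by
  obtain ⟨k, w, hw, rfl⟩ := hc.exists_eq_cycleOf
  obtain ⟨j, rfl, rfl⟩ : ∃ j, t = w j ∧ s = w (j + 1) := by
    by_contra h
    rw [cycleOf, sum_arc_apply hw, if_neg h] at hts
    exact hts.false
  -- Rotated to start at `s = w (j + 1)`, the cycle ends at `t = w j` and closes with `t → s`.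
  have hlast : Fin.last k + (j + 1) = j := by
    rw [add_left_comm, Fin.last_add_one, add_zero]
  refine ⟨pathOf fun l => w (l + (j + 1)), ?_, ?_⟩
  · simpa [hlast, comp_def] using isPath_pathOf (hw.comp (add_left_injective (j + 1)))
  · rw [← cycleOf_comp_add_right w (j + 1), cycleOf_eq_pathOf_add, hlast, zero_add]

end Arcs

theorem IsCycle.ne_zero {c : V → V → ℕ} (hc : IsCycle c) : c ≠ 0 := by
  obtain ⟨k, w, -, hone, -⟩ := hc
  rintro rfl
  exact zero_ne_one (hone 0)

theorem isCycleSum_zero : IsCycleSum (0 : V → V → ℕ) :=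
  ⟨0, ![], fun i => i.elim0, fun _ _ => rfl⟩

theorem IsCycle.isCycleSum_add {c d : V → V → ℕ} (hc : IsCycle c) (hd : IsCycleSum d) :
    IsCycleSum (c + d) := by
  obtain ⟨n, e, he, hde⟩ := hd
  refine ⟨n + 1, Fin.cons c e, Fin.cases hc he, fun u v => ?_⟩
  simp [Fin.sum_univ_succ, hde]

theorem IsCycleSum.exists_cycle_add {M : V → V → ℕ} (hM : IsCycleSum M) {a b : V}
    (hab : 0 < M a b) : ∃ c d, IsCycle c ∧ 0 < c a b ∧ IsCycleSum d ∧ M = c + d := by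
  obtain ⟨n, c, hc, hMc⟩ := hM
  obtain ⟨i, -, hi⟩ := sum_pos_iff.mp (hMc a b ▸ hab)
  obtain ⟨n, rfl⟩ := Nat.exists_eq_succ_of_ne_zero i.pos.ne'
  refine ⟨c i, fun u v => ∑ j, c (i.succAbove j) u v, hc i, hi,
    ⟨n, _, fun j => hc _, fun _ _ => rfl⟩, funext₂ fun u v => ?_⟩
  rw [hMc, Fin.sum_univ_succAbove _ i]
  rfl

section Balanced

variable [Fintype V]

def IsBalanced (m : V → V → ℕ) : Prop := ∀ v, ∑ u, m u v = ∑ u, m v u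

theorem IsBalanced.tsub {m c : V → V → ℕ} (hm : IsBalanced m) (hc : IsBalanced c)
    (hcm : c ≤ m) : IsBalanced (m - c) := by
  intro v
  simp only [Pi.sub_apply]
  rw [sum_tsub_distrib _ fun u _ => hcm u v, sum_tsub_distrib _ fun u _ => hcm v u, hm v, hc v]

section DecidableEq

variable [DecidableEq V]

theorem sum_arc_into (a b v : V) : ∑ u, arc a b u v = if v = b then 1 else 0 := by
  simp [arc, ite_and]

theorem sum_arc_out_of (a b v : V) : ∑ u, arc a b v u = if v = a then 1 else 0 := by
  simp [arc, ite_and]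

theorem isBalanced_cycleOf {k : ℕ} (w : Fin (k + 1) → V) : IsBalanced (cycleOf w) := by
  intro v
  simp only [cycleOf, Finset.sum_apply]
  rw [sum_comm, sum_comm (γ := V)]
  simp only [sum_arc_into, sum_arc_out_of]
  exact Fintype.sum_equiv (Equiv.addRight 1) _ _ fun l => rfl

theorem isBalanced_add_arc {m : V → V → ℕ} {s t : V}
    (hs : ∑ u, m s u = ∑ u, m u s + 1) (ht : ∑ u, m u t = ∑ u, m t u + 1)
    (hother : ∀ v, v ≠ s → v ≠ t → ∑ u, m u v = ∑ u, m v u) :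
    IsBalanced (m + arc t s) := by
  intro v
  simp only [Pi.add_apply, sum_add_distrib, sum_arc_into, sum_arc_out_of]
  by_cases hvs : v = s <;> by_cases hvt : v = t
  · subst hvs hvt
    omega
  · subst hvs
    rw [if_pos rfl, if_neg hvt]
    omega
  · subst hvt
    rw [if_pos rfl, if_neg hvs]
    omega
  · rw [if_neg hvs, if_neg hvt]
    exact congrArg (· + 0) (hother v hvs hvt)

end DecidableEq

theorem IsCycle.isBalanced {c : V → V → ℕ} (hc : IsCycle c) : IsBalanced c := by
  classical
  obtain ⟨k, w, -, rfl⟩ := hc.exists_eq_cycleOf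
  exact isBalanced_cycleOf w

theorem IsBalanced.exists_isCycle_le {m : V → V → ℕ} (hm : IsBalanced m) (h0 : m ≠ 0) :
    ∃ c, IsCycle c ∧ c ≤ m := by
  classical
  -- By balance, the head of an arc out of a vertex with positive out-degree again has one.
  have hsucc : ∀ v, 0 < ∑ u, m v u → ∃ u, 0 < m v u ∧ 0 < ∑ x, m u x := by
    intro v hv
    obtain ⟨u, -, hu⟩ := sum_pos_iff.mp hv
    refine ⟨u, hu, ?_⟩
    rw [← hm u]
    exact hu.trans_le
      (single_le_sum (f := fun x => m x u) (fun _ _ => Nat.zero_le _) (mem_univ v))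
  choose next hnext hnext_out using hsucc
  let S := {v // 0 < ∑ u, m v u}
  have : Nonempty S := by
    obtain ⟨a, b, hab⟩ : ∃ a b, m a b ≠ 0 := by simpa [funext_iff] using h0
    exact ⟨⟨a, (Nat.pos_of_ne_zero hab).trans_le
      (single_le_sum (fun _ _ => Nat.zero_le _) (mem_univ b))⟩⟩
  obtain ⟨k, w, hw, hw_next⟩ :=
    exists_injective_cycle fun v : S => (⟨next v v.2, hnext_out v v.2⟩ : S)
  refine ⟨cycleOf fun l => (w l).val, isCycle_cycleOf (Subtype.val_injective.comp hw),
    cycleOf_le (Subtype.val_injective.comp hw) fun l => ?_⟩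
  show 0 < m (w l).val (w (l + 1)).val
  rw [← hw_next l]
  exact hnext _ _

theorem IsBalanced.isCycleSum {m : V → V → ℕ} (hm : IsBalanced m) : IsCycleSum m := by
  induction m using WellFoundedLT.induction with
  | _ m ih =>
  rcases eq_or_ne m 0 with rfl | h0
  · exact isCycleSum_zero
  obtain ⟨c, hc, hcm⟩ := hm.exists_isCycle_le h0
  have hlt : m - c < m := by
    refine tsub_le_self.lt_of_ne fun h => hc.ne_zero ((add_eq_right (b := m)).mp ?_)
    nth_rw 1 [← h]
    exact add_tsub_cancel_of_le hcm
  rw [← add_tsub_cancel_of_le hcm]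
  exact hc.isCycleSum_add (ih _ hlt (hm.tsub hc.isBalanced hcm))

end Balanced

end Multidigraph

theorem path_plus_cycles_decomposition_general {V : Type*} [Fintype V]
    (m : V → V → ℕ) (s t : V)
    (hs : ∑ u, m s u = (∑ u, m u s) + 1)
    (ht : ∑ u, m u t = (∑ u, m t u) + 1)
    (hother : ∀ v : V, v ≠ s → v ≠ t → ∑ u, m u v = ∑ u, m v u) :
    ∃ p d : V → V → ℕ, IsPath p s t ∧ IsCycleSum d ∧
      ∀ u v, m u v = p u v + d u v := by
  classical
  obtain ⟨c, d, hc, hc_ts, hd, hmcd⟩ :=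
    (isBalanced_add_arc hs ht hother).isCycleSum.exists_cycle_add (a := t) (b := s)
      (by simp [arc])
  obtain ⟨p, hp, rfl⟩ := hc.exists_isPath_add_arc hc_ts
  refine ⟨p, d, hp, hd, fun u v => ?_⟩
  have huv := congrFun₂ hmcd u v
  simp only [Pi.add_apply] at huv
  omega

/-- If in a finite multidigraph `m` the vertex `s` has out-degree
exceeding its in-degree by exactly one, `t ≠ s` has in-degree exceeding its
out-degree by exactly one, and every other vertex is balanced, then `m` is the sum
of a directed path from `s` to `t` and a finite sum of directed cycles. -/
theorem path_plus_cycles_decomposition {V : Type*} [Fintype V]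
    (m : V → V → ℕ) (s t : V) (hst : s ≠ t)
    (hs : ∑ u, m s u = (∑ u, m u s) + 1)
    (ht : ∑ u, m u t = (∑ u, m t u) + 1)
    (hother : ∀ v : V, v ≠ s → v ≠ t → ∑ u, m u v = ∑ u, m v u) :
    ∃ p d : V → V → ℕ, IsPath p s t ∧ IsCycleSum d ∧
      ∀ u v, m u v = p u v + d u v :=
  path_plus_cycles_decomposition_general m s t hs ht hother
end

section
/- Let n = 2k+1 ≥ 3 be odd, and let M_n^+ be the multidigraph on vertex set ℤ_{2n} with one arc i → i+1 for every i ∈ ℤ_{2n}, one arc i → i+n for every even i, and one arc i → i−1 for every odd i. Then the multidigraph obtained from M_n^+ by identifying, for each j ∈ {0,1,…,n−1}, the vertices 2j and 2j+1 into a single vertex j and deleting the arcs 2j → 2j+1 and 2j+1 → 2j of the n digons, is isomorphic to the Cayley digraph Z_n of the cyclic group ℤ_n with connection set {1, k}, i.e., the simple digraph on ℤ_n with an arc j → j+1 and an arc j → j+k for every j ∈ ℤ_n. -/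
instance instNeZeroTwoMul (k : ℕ) : NeZero (2 * (2 * k + 1)) := ⟨by positivity⟩

/-- The Möbius ladder digraph `M_n^+` for odd `n = 2k + 1`, on vertex set
`ℤ_{2n}`: one arc `i → i + 1` for every `i`, one arc `i → i + n` for every even
`i`, and one arc `i → i - 1` for every odd `i`. -/
def mobiusLadderPlus (k : ℕ) : ZMod (2 * (2 * k + 1)) → ZMod (2 * (2 * k + 1)) → ℕ :=
  fun i j =>
    (if j = i + 1 then 1 else 0) +
    (if i.val % 2 = 0 ∧ j = i + (2 * k + 1 : ℕ) then 1 else 0) +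
    (if i.val % 2 = 1 ∧ j = i - 1 then 1 else 0)

/-- `M_n^+` with the two arcs `2j → 2j + 1` and `2j + 1 → 2j` of each of its `n`
digons deleted. -/
def mobiusLadderPlusDel (k : ℕ) :
    ZMod (2 * (2 * k + 1)) → ZMod (2 * (2 * k + 1)) → ℕ :=
  fun i j => mobiusLadderPlus k i j -
    (if (i.val % 2 = 0 ∧ j = i + 1) ∨ (i.val % 2 = 1 ∧ j = i - 1) then 1 else 0)

/-- The map identifying the vertices `2j` and `2j + 1` of `ℤ_{2n}` with the vertex
`j` of `ℤ_n` (where `n = 2k + 1`). -/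
def contractMap (k : ℕ) : ZMod (2 * (2 * k + 1)) → ZMod (2 * k + 1) :=
  fun i => ((i.val / 2 : ℕ) : ZMod (2 * k + 1))

/-- The multidigraph obtained from `M_n^+` by deleting the arcs of its `n` digons
and identifying, for each `j`, the vertices `2j` and `2j + 1` into the single
vertex `j` (arc multiplicities between identified classes are added). -/
def contractedMobius (k : ℕ) : ZMod (2 * k + 1) → ZMod (2 * k + 1) → ℕ :=
  fun a b => ∑ i : ZMod (2 * (2 * k + 1)), ∑ j : ZMod (2 * (2 * k + 1)),
    if contractMap k i = a ∧ contractMap k j = b then mobiusLadderPlusDel k i j else 0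

/-- The Cayley digraph `Z_n` of the cyclic group `ℤ_n` (`n = 2k + 1`) with
connection set `{1, k}`: an arc `j → j + 1` and an arc `j → j + k` for every `j`. -/
def cayleyZ (k : ℕ) : ZMod (2 * k + 1) → ZMod (2 * k + 1) → ℕ :=
  fun a b => (if b = a + 1 then 1 else 0) + (if b = a + (k : ℕ) then 1 else 0)

section Aux

variable (k : ℕ)

lemma aux_cm_even (m : ℕ) :
    contractMap k ((2 * m : ℕ) : ZMod (2 * (2 * k + 1))) = (m : ZMod (2 * k + 1)) := by
  unfold contractMap
  rw [ZMod.val_natCast, Nat.mul_mod_mul_left, Nat.mul_div_cancel_left _ (by norm_num : 0 < 2),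
    ZMod.natCast_mod]

lemma aux_cm_odd (m : ℕ) :
    contractMap k ((2 * m + 1 : ℕ) : ZMod (2 * (2 * k + 1))) = (m : ZMod (2 * k + 1)) := by
  have hn : 0 < 2 * k + 1 := by omega
  obtain ⟨q, r, hr, rfl⟩ : ∃ q r, r < 2 * k + 1 ∧ m = (2 * k + 1) * q + r :=
    ⟨m / (2 * k + 1), m % (2 * k + 1), Nat.mod_lt _ hn, (Nat.div_add_mod m _).symm⟩
  unfold contractMap
  have h1 : 2 * ((2 * k + 1) * q + r) + 1 = (2 * (2 * k + 1)) * q + (2 * r + 1) := by ring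
  rw [ZMod.val_natCast, h1, Nat.mul_add_mod, Nat.mod_eq_of_lt (by omega)]
  have h2 : (2 * r + 1) / 2 = r := by omega
  rw [h2, Nat.cast_add, Nat.cast_mul, ZMod.natCast_self, zero_mul, zero_add]

lemma aux_fiber (a : ZMod (2 * k + 1)) (i : ZMod (2 * (2 * k + 1)))
    (h : contractMap k i = a) :
    i = ((2 * a.val : ℕ) : ZMod (2 * (2 * k + 1))) ∨
      i = ((2 * a.val + 1 : ℕ) : ZMod (2 * (2 * k + 1))) := by
  have hiv : i.val < 2 * (2 * k + 1) := ZMod.val_lt i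
  have hdiv : i.val / 2 < 2 * k + 1 := by omega
  have hval : a.val = i.val / 2 := by
    rw [← h]; unfold contractMap; rw [ZMod.val_natCast, Nat.mod_eq_of_lt hdiv]
  have h1 : i.val = 2 * a.val ∨ i.val = 2 * a.val + 1 := by omega
  rcases h1 with h1 | h1
  · left; rw [← h1, ZMod.natCast_val, ZMod.cast_id]
  · right; rw [← h1, ZMod.natCast_val, ZMod.cast_id]

end Aux


/-- For odd `n = 2k + 1 ≥ 3`, the multidigraph obtained from the
Möbius ladder `M_n^+` by contracting its `n` digons (identifying `2j` and `2j + 1`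
into `j` and deleting the digon arcs) is isomorphic to the Cayley digraph of `ℤ_n`
with connection set `{1, k}`. -/
theorem contracted_mobiusLadder_iso_cayley (k : ℕ) (hk : 1 ≤ k) :
    ∃ e : ZMod (2 * k + 1) ≃ ZMod (2 * k + 1),
      ∀ a b : ZMod (2 * k + 1), contractedMobius k (e a) (e b) = cayleyZ k a b := by
  refine ⟨Equiv.refl _, fun a b => ?_⟩
  simp only [Equiv.refl_apply]
  set N := 2 * (2 * k + 1) with hN
  haveI : NeZero (2 * k + 1) := ⟨by omega⟩
  set i0 : ZMod N := ((2 * a.val : ℕ) : ZMod N) with hi0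
  set i1 : ZMod N := ((2 * a.val + 1 : ℕ) : ZMod N) with hi1
  have hav : a.val < 2 * k + 1 := ZMod.val_lt a
  have hv0 : i0.val = 2 * a.val := by
    rw [hi0, ZMod.val_natCast, Nat.mod_eq_of_lt (by omega)]
  have hv1 : i1.val = 2 * a.val + 1 := by
    rw [hi1, ZMod.val_natCast, Nat.mod_eq_of_lt (by omega)]
  have h01 : i0 ≠ i1 := fun h => by rw [h] at hv0; omega
  have hone : ((1 : ℕ) : ZMod N).val = 1 := by
    rw [ZMod.val_natCast, Nat.mod_eq_of_lt (by omega)]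
  have hnn : ((2 * k + 1 : ℕ) : ZMod N).val = 2 * k + 1 := by
    rw [ZMod.val_natCast, Nat.mod_eq_of_lt (by omega)]
  -- arc-multiplicity computations from the two representatives
  have hDel0 : ∀ j, mobiusLadderPlusDel k i0 j =
      if j = i0 + ((2 * k + 1 : ℕ) : ZMod N) then 1 else 0 := by
    intro j
    have hpar : i0.val % 2 = 0 := by omega
    have hne : i0 + 1 ≠ i0 + ((2 * k + 1 : ℕ) : ZMod N) := by
      intro h
      have h2 : (1 : ZMod N) = ((2 * k + 1 : ℕ) : ZMod N) := add_left_cancel h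
      have h3 : ((1 : ℕ) : ZMod N) = ((2 * k + 1 : ℕ) : ZMod N) := by exact_mod_cast h2
      rw [← h3] at hnn
      omega
    unfold mobiusLadderPlusDel mobiusLadderPlus
    rw [hpar]
    by_cases h1 : j = i0 + 1
    · simp [h1, hne]
    · simp [h1]
  have hDel1 : ∀ j, mobiusLadderPlusDel k i1 j = if j = i1 + 1 then 1 else 0 := by
    intro j
    have hpar : i1.val % 2 = 1 := by omega
    have hne : i1 - 1 ≠ i1 + 1 := by
      intro h
      have h2 : (2 : ZMod N) = 0 := by
        have h3 := sub_eq_zero.mpr h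
        rw [show i1 - 1 - (i1 + 1) = -2 by ring] at h3
        linear_combination -h3
      have h4 : ((2 : ℕ) : ZMod N) = ((0 : ℕ) : ZMod N) := by exact_mod_cast h2
      have h5 : ((2 : ℕ) : ZMod N).val = ((0 : ℕ) : ZMod N).val := by rw [h4]
      rw [ZMod.val_natCast, ZMod.val_natCast, Nat.mod_eq_of_lt (by omega)] at h5
      simp at h5
    unfold mobiusLadderPlusDel mobiusLadderPlus
    rw [hpar]
    by_cases h1 : j = i1 - 1
    · simp [h1, hne]
    · simp [h1]
  -- the two relevant target vertices
  have hcm0 : contractMap k i0 = a := by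
    rw [hi0, aux_cm_even, ZMod.natCast_val, ZMod.cast_id]
  have hcm1 : contractMap k i1 = a := by
    rw [hi1, aux_cm_odd, ZMod.natCast_val, ZMod.cast_id]
  have ht0 : contractMap k (i0 + ((2 * k + 1 : ℕ) : ZMod N)) = a + (k : ℕ) := by
    have : i0 + ((2 * k + 1 : ℕ) : ZMod N) = ((2 * (a.val + k) + 1 : ℕ) : ZMod N) := by
      rw [hi0]; push_cast; ring
    rw [this, aux_cm_odd]
    push_cast [ZMod.natCast_val, ZMod.cast_id]
    ring
  have ht1 : contractMap k (i1 + 1) = a + 1 := by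
    have : i1 + 1 = ((2 * (a.val + 1) : ℕ) : ZMod N) := by
      rw [hi1]; push_cast; ring
    rw [this, aux_cm_even]
    push_cast [ZMod.natCast_val, ZMod.cast_id]
    ring
  -- compute the contracted multiplicity
  have hS0 : (∑ j : ZMod N, if contractMap k j = b then mobiusLadderPlusDel k i0 j else 0)
      = if a + (k : ℕ) = b then 1 else 0 := by
    have : ∀ j : ZMod N, (if contractMap k j = b then mobiusLadderPlusDel k i0 j else 0)
        = if j = i0 + ((2 * k + 1 : ℕ) : ZMod N)
            then (if contractMap k j = b then 1 else 0) else 0 := by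
      intro j
      rw [hDel0 j]
      split_ifs <;> rfl
    rw [Finset.sum_congr rfl fun j _ => this j,
      Finset.sum_ite_eq' Finset.univ _ (fun j => if contractMap k j = b then 1 else 0),
      if_pos (Finset.mem_univ _), ht0]
  have hS1 : (∑ j : ZMod N, if contractMap k j = b then mobiusLadderPlusDel k i1 j else 0)
      = if a + 1 = b then 1 else 0 := by
    have : ∀ j : ZMod N, (if contractMap k j = b then mobiusLadderPlusDel k i1 j else 0)
        = if j = i1 + 1 then (if contractMap k j = b then 1 else 0) else 0 := by
      intro j
      rw [hDel1 j]
      split_ifs <;> rfl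
    rw [Finset.sum_congr rfl fun j _ => this j,
      Finset.sum_ite_eq' Finset.univ _ (fun j => if contractMap k j = b then 1 else 0),
      if_pos (Finset.mem_univ _), ht1]
  unfold contractedMobius
  have hsplit : ∀ i : ZMod N,
      (∑ j : ZMod N, if contractMap k i = a ∧ contractMap k j = b
          then mobiusLadderPlusDel k i j else 0)
      = (if i = i0 then (∑ j : ZMod N, if contractMap k j = b
            then mobiusLadderPlusDel k i j else 0) else 0)
        + (if i = i1 then (∑ j : ZMod N, if contractMap k j = b
            then mobiusLadderPlusDel k i j else 0) else 0) := by
    intro i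
    by_cases hia : contractMap k i = a
    · rcases aux_fiber k a i hia with h | h
      · rw [← hi0] at h
        simp [h, hcm0, h01]
      · rw [← hi1] at h
        simp [h, hcm1, Ne.symm h01]
    · have hi0' : i ≠ i0 := fun h => hia (h ▸ hcm0)
      have hi1' : i ≠ i1 := fun h => hia (h ▸ hcm1)
      simp [hia, hi0', hi1']
  rw [Finset.sum_congr rfl fun i _ => hsplit i, Finset.sum_add_distrib]
  simp only [Finset.sum_ite_eq', Finset.mem_univ, if_true]
  rw [hS0, hS1]
  unfold cayleyZ
  by_cases h1 : b = a + 1 <;> by_cases h2 : b = a + (k : ℕ) <;>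
    simp [h1, h2, eq_comm, add_comm]
end
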